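/- A line l with foot of perpendicular p from the origin o intersects the closed segment from o to the point q = (R cos φ', R sin φ') if and only if p lies in the closed disk of diameter R centered at the midpoint of o and q (i.e., the disk with o and q as antipodal boundary points), excluding the degenerate case p = o. -/

import Mathlib

/-!
The segment from `0` to `q` consists of the points `t • q`, `t ∈ [0, 1]`, and such a point lies
on the line `⟪z, p⟫ = ⟪p, p⟫` iff `t ⟪q, p⟫ = ⟪p, p⟫`; as `⟪p, p⟫ > 0`, a solution `t ∈ [0, 1]`
exists iff `⟪p, p⟫ ≤ ⟪p, q⟫`. By Thales, this says `⟪p, p - q⟫ ≤ 0`, i.e. `p` lies in the disk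
with diameter `0q`.
-/

open Real

/-- The plane ℝ² with the Euclidean metric. -/
abbrev E := EuclideanSpace ℝ (Fin 2)

/-- The point of E with given coordinates. -/
noncomputable def pt (a b : ℝ) : E := (WithLp.equiv 2 (Fin 2 → ℝ)).symm ![a, b]

/-- The line whose foot of perpendicular from the origin is p (p ≠ 0). -/
def lineOf (p : E) : Set E := {z | (inner ℝ z p : ℝ) = (inner ℝ p p : ℝ)}

section InnerProductSpace

variable {F : Type*} [NormedAddCommGroup F] [InnerProductSpace ℝ F]

open Metric in
theorem mem_closedBall_half_smul_iff_inner_self_le {p q : F} :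
    p ∈ closedBall ((1 / 2 : ℝ) • q) (‖q‖ / 2) ↔ inner ℝ p p ≤ inner ℝ p q := by
  have hdist : dist p ((1 / 2 : ℝ) • q) ^ 2 = inner ℝ p p - inner ℝ p q + (‖q‖ / 2) ^ 2 := by
    rw [dist_eq_norm, norm_sub_sq_real, norm_smul_of_nonneg (by norm_num), real_inner_smul_right,
      ← real_inner_self_eq_norm_sq p]
    ring
  rw [mem_closedBall, ← sq_le_sq₀ dist_nonneg (by positivity), hdist]
  constructor <;> intro h <;> linarith

theorem hyperplane_inter_segment_zero_nonempty_iff {p q : F} {c : ℝ} (hc : 0 < c) :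
    ({z | inner ℝ z p = c} ∩ segment ℝ 0 q).Nonempty ↔ c ≤ inner ℝ q p := by
  simp only [segment_eq_image, smul_zero, zero_add]
  constructor
  · rintro ⟨_, hz, t, ⟨ht0, ht1⟩, rfl⟩
    simp only [Set.mem_ofPred_eq, real_inner_smul_left] at hz
    have hqp : 0 < inner ℝ q p := pos_of_mul_pos_right (hz ▸ hc) ht0
    calc c = t * inner ℝ q p := hz.symm
      _ ≤ inner ℝ q p := mul_le_of_le_one_left hqp.le ht1
  · intro h
    have hqp : 0 < inner ℝ q p := hc.trans_le h
    refine ⟨(c / inner ℝ q p) • q, ?_, c / inner ℝ q p, ⟨by positivity, ?_⟩, rfl⟩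
    · simp [real_inner_smul_left, hqp.ne']
    · rwa [div_le_one hqp]

end InnerProductSpace

theorem norm_pt_mul_cos_mul_sin (R φ : ℝ) : ‖pt (R * cos φ) (R * sin φ)‖ = |R| := by
  rw [EuclideanSpace.norm_eq, ← Real.sqrt_sq_eq_abs]
  congr 1
  simp only [pt, WithLp.equiv_symm_apply, norm_eq_abs, sq_abs, Fin.sum_univ_two,
    Matrix.cons_val_zero, Matrix.cons_val_one, mul_pow]
  nlinarith [sin_sq_add_cos_sq φ]

/-- A line with foot of perpendicular `p ≠ o` from the origin `o` intersects the closed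
segment from `o` to `q = (R cos φ', R sin φ')` iff `p` lies in the closed disk having
`o` and `q` as antipodal boundary points. -/
theorem stmt1 (R φ' : ℝ) (hR : 0 < R) (p : E) (hp : p ≠ 0) :
    (lineOf p ∩ segment ℝ (0 : E) (pt (R * cos φ') (R * sin φ'))).Nonempty ↔
      p ∈ Metric.closedBall ((1 / 2 : ℝ) • pt (R * cos φ') (R * sin φ')) (R / 2) := by
  set q := pt (R * cos φ') (R * sin φ')
  have hRq : R / 2 = ‖q‖ / 2 := by rw [norm_pt_mul_cos_mul_sin, abs_of_pos hR]
  rw [hRq, mem_closedBall_half_smul_iff_inner_self_le, real_inner_comm q p]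
  exact hyperplane_inter_segment_zero_nonempty_iff (real_inner_self_pos.mpr hp)
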